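/- Let B be an unramified commutative A-algebra of finite type (so that Ω_{B/A} = 0). Then the kernel of the multiplication map μ : B ⊗_A B → B is generated by an idempotent element; equivalently, B ⊗_A B decomposes as a product of rings B × B'₀ where the first projection is identified with μ. -/
import Mathlib

open scoped TensorProduct

/-- If `B` is a formally unramified `A`-algebra of finite type (so `Ω_{B/A} = 0`), then
the kernel of the multiplication map `μ : B ⊗_A B → B` is generated by an idempotent. -/
theorem stmt_14 (A B : Type*) [CommRing A] [CommRing B] [Algebra A B]
    [Algebra.FormallyUnramified A B] [Algebra.FiniteType A B] :
    ∃ e : TensorProduct A B B, e * e = e ∧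
      RingHom.ker (Algebra.TensorProduct.lmul' A (S := B)).toRingHom
        = Ideal.span {e} := by
  obtain ⟨t, ht₁, ht₂⟩ :=
    (Algebra.FormallyUnramified.iff_exists_tensorProduct (R := A) (S := B)).mp inferInstance
  have hker : RingHom.ker (Algebra.TensorProduct.lmul' A (S := B)).toRingHom
      = KaehlerDifferential.ideal A B := rfl
  have hspan := KaehlerDifferential.span_range_eq_ideal A B
  -- anything in the ideal kills t
  have hannih : ∀ x ∈ KaehlerDifferential.ideal A B, x * t = 0 := by
    intro x hx
    rw [← hspan] at hx
    induction hx using Submodule.span_induction with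
    | mem x hx => obtain ⟨s, rfl⟩ := hx; exact ht₁ s
    | zero => simp
    | add x y _ _ hx hy => rw [add_mul, hx, hy, add_zero]
    | smul r x _ hx => rw [smul_eq_mul, mul_assoc, hx, mul_zero]
  have hmem : 1 - t ∈ KaehlerDifferential.ideal A B := by
    simp [KaehlerDifferential.ideal, RingHom.mem_ker, ht₂]
  have h0 : (1 - t) * t = 0 := hannih _ hmem
  refine ⟨1 - t, ?_, ?_⟩
  · have ht : t * t = t := by linear_combination -h0
    linear_combination ht
  · rw [hker]
    apply le_antisymm
    · intro x hx
      have hxt : x * t = 0 := hannih x hx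
      rw [Ideal.mem_span_singleton]
      exact ⟨x, by linear_combination hxt⟩
    · rw [Ideal.span_le, Set.singleton_subset_iff]
      exact hmem
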